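/- Let ā be a random variable with E(ā^{2n}) = C_n (Catalan number) and E(ā^{2n+1}) = 0, and let t be an independent random variable uniform on a finite multiset {t_σ : σ ∈ G} of real numbers. Then ā₂ = t·(ā² − 2 + t) satisfies E(ā₂^n) = (1/|G|)·Σ_{i=0}^n binom(n,i)·C_i·Σ_{σ∈G} t_σ^n (t_σ − 2)^{n−i}. -/

import Mathlib

open MeasureTheory ProbabilityTheory Finset

/-!
Expanding `ā₂ = T·(X² + (T − 2))` binomially, the `i`-th term `binom(n,i) · X^{2i} · Tⁿ (T − 2)^{n−i}`
has expectation `binom(n,i) · Cᵢ · E(Tⁿ (T − 2)^{n−i})` by independence. Linearity needs each term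
to be integrable: the powers of `X` are, because their integrals `Cᵢ` are nonzero, and functions
of `T` are bounded since `T` a.s. takes only the finitely many values `tval σ`.
-/

theorem catalan_pos (n : ℕ) : 0 < catalan n :=
  Nat.pos_of_ne_zero fun h =>
    Nat.centralBinom_ne_zero n (by rw [← succ_mul_catalan_eq_centralBinom, h, mul_zero])

theorem mul_sq_sub_two_add_pow {R : Type*} [CommRing R] (x t : R) (n : ℕ) :
    (t * (x ^ 2 - 2 + t)) ^ n
      = ∑ i ∈ range (n + 1), (n.choose i : R) * (x ^ (2 * i) * (t ^ n * (t - 2) ^ (n - i))) := by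
  rw [show x ^ 2 - 2 + t = x ^ 2 + (t - 2) by ring, mul_pow, add_pow, mul_sum]
  refine sum_congr rfl fun i _ => ?_
  rw [pow_mul]
  ring

section

variable {Ω β : Type*} [MeasurableSpace Ω] [MeasurableSpace β] {μ : Measure Ω} {T : Ω → β}

theorem ae_mem_range_of_integral_comp_eq_average [IsFiniteMeasure μ]
    [MeasurableSingletonClass β] {G : Type*} [Fintype G] {tval : G → β} (hT : Measurable T)
    (hTdist : ∀ f : β → ℝ,
      ∫ ω, f (T ω) ∂μ = (∑ σ : G, f (tval σ)) / (Fintype.card G : ℝ)) :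
    ∀ᵐ ω ∂μ, T ω ∈ Set.range tval := by
  have hzero : μ.real (T ⁻¹' (Set.range tval)ᶜ) = 0 := by
    have h := hTdist ((Set.range tval)ᶜ.indicator 1)
    simp only [Set.indicator_of_notMem (Set.notMem_compl_iff.mpr (Set.mem_range_self _)),
      sum_const_zero, zero_div] at h
    rwa [← integral_indicator_one (hT (Set.finite_range tval).measurableSet.compl)]
  rw [measureReal_eq_zero_iff] at hzero
  exact measure_eq_zero_iff_ae_notMem.mp hzero |>.mono fun ω hω => by simpa using hω

theorem integrable_comp_of_ae_mem_finite [IsFiniteMeasure μ] {S : Set β} (hS : S.Finite)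
    (hT : AEMeasurable T μ) (hTS : ∀ᵐ ω ∂μ, T ω ∈ S) {g : β → ℝ} (hg : Measurable g) :
    Integrable (fun ω => g (T ω)) μ := by
  obtain ⟨C, hC⟩ := (hS.image fun x => ‖g x‖).bddAbove
  exact .of_bound (hg.comp_aemeasurable hT).aestronglyMeasurable C
    (hTS.mono fun ω hω => hC ⟨T ω, hω, rfl⟩)

end

theorem moments_of_a2_general {Ω : Type*} [MeasurableSpace Ω] (μ : Measure Ω)
    [IsProbabilityMeasure μ] {G : Type*} [Fintype G] (tval : G → ℝ)
    (X T : Ω → ℝ) (hT : Measurable T)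
    (hindep : IndepFun X T μ)
    (hXeven : ∀ n : ℕ, ∫ ω, (X ω) ^ (2 * n) ∂μ = (catalan n : ℝ))
    (hTdist : ∀ f : ℝ → ℝ,
      ∫ ω, f (T ω) ∂μ = (∑ σ : G, f (tval σ)) / (Fintype.card G : ℝ)) :
    ∀ n : ℕ, ∫ ω, (T ω * ((X ω) ^ 2 - 2 + T ω)) ^ n ∂μ
      = (∑ i ∈ Finset.range (n + 1), (n.choose i : ℝ) * (catalan i : ℝ) *
          ∑ σ : G, (tval σ) ^ n * (tval σ - 2) ^ (n - i)) / (Fintype.card G : ℝ) := by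
  intro n
  have hXint (i : ℕ) : Integrable (fun ω => X ω ^ (2 * i)) μ :=
    .of_integral_ne_zero (by rw [hXeven i]; exact_mod_cast (catalan_pos i).ne')
  have hTint (i : ℕ) : Integrable (fun ω => T ω ^ n * (T ω - 2) ^ (n - i)) μ :=
    integrable_comp_of_ae_mem_finite (Set.finite_range tval) hT.aemeasurable
      (ae_mem_range_of_integral_comp_eq_average hT hTdist)
      (g := fun t => t ^ n * (t - 2) ^ (n - i)) (by fun_prop)
  have hindep' (i : ℕ) :
      IndepFun (fun ω => X ω ^ (2 * i)) (fun ω => T ω ^ n * (T ω - 2) ^ (n - i)) μ :=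
    hindep.comp (φ := fun x => x ^ (2 * i)) (ψ := fun t => t ^ n * (t - 2) ^ (n - i))
      (by fun_prop) (by fun_prop)
  have hprod (i : ℕ) : Integrable (fun ω => X ω ^ (2 * i) * (T ω ^ n * (T ω - 2) ^ (n - i))) μ :=
    (hindep' i).integrable_mul (hXint i) (hTint i)
  simp_rw [mul_sq_sub_two_add_pow]
  rw [integral_finsetSum _ fun i _ => (hprod i).const_mul _, sum_div]
  refine sum_congr rfl fun i _ => ?_
  rw [integral_const_mul, (hindep' i).integral_fun_mul_eq_mul_integral (hXint i).1 (hTint i).1,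
    hXeven, hTdist (fun t => t ^ n * (t - 2) ^ (n - i)), mul_div_assoc, mul_assoc]

/-- If `X` has even moments the Catalan numbers and vanishing odd
moments, and `T` is an independent random variable uniform on the finite multiset
`{tval σ : σ ∈ G}`, then `ā₂ = T·(X² − 2 + T)` satisfies
`E(ā₂^n) = (1/|G|)·∑_{i=0}^n binom(n,i)·C_i·∑_σ tval σ^n (tval σ − 2)^{n−i}`. -/
theorem moments_of_a2 {Ω : Type*} [MeasurableSpace Ω] (μ : Measure Ω)
    [IsProbabilityMeasure μ] {G : Type*} [Fintype G] (tval : G → ℝ)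
    (X T : Ω → ℝ) (hX : Measurable X) (hT : Measurable T)
    (hindep : IndepFun X T μ)
    (hXeven : ∀ n : ℕ, ∫ ω, (X ω) ^ (2 * n) ∂μ = (catalan n : ℝ))
    (hXodd : ∀ n : ℕ, ∫ ω, (X ω) ^ (2 * n + 1) ∂μ = 0)
    (hTdist : ∀ f : ℝ → ℝ,
      ∫ ω, f (T ω) ∂μ = (∑ σ : G, f (tval σ)) / (Fintype.card G : ℝ)) :
    ∀ n : ℕ, ∫ ω, (T ω * ((X ω) ^ 2 - 2 + T ω)) ^ n ∂μ
      = (∑ i ∈ Finset.range (n + 1), (n.choose i : ℝ) * (catalan i : ℝ) *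
          ∑ σ : G, (tval σ) ^ n * (tval σ - 2) ^ (n - i)) / (Fintype.card G : ℝ) :=
  moments_of_a2_general μ tval X T hT hindep hXeven hTdist
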